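/- arXiv:1701.03186 — 5 statements merged into one kernel-verified Lean document; each statement's English description precedes it below -/
import Mathlib

section
/- Let 0 < M < 3/2 + √2, and let ⟨r_t⟩_{t≥0} be a nonnegative real sequence satisfying r_{t+1} ≤ M·max_{0≤s≤t} r_s − (1/2)·∑_{s=0}^t r_s + ω for all t ≥ t₀, where ω is a real constant and t₀ ≥ 0. Then ∑_{t=0}^∞ r_t < ∞. -/
open Finset

private def pS (r : ℕ → ℝ) (t : ℕ) : ℝ := ∑ s ∈ Finset.range (t + 1), r s

private def pM (r : ℕ → ℝ) (t : ℕ) : ℝ :=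
  (Finset.range (t + 1)).sup' (Finset.nonempty_range_iff.mpr t.succ_ne_zero) r

private lemma pS_succ (r : ℕ → ℝ) (t : ℕ) : pS r (t + 1) = pS r t + r (t + 1) :=
  Finset.sum_range_succ r (t + 1)

private lemma le_pM (r : ℕ → ℝ) {s t : ℕ} (hs : s ≤ t) : r s ≤ pM r t :=
  Finset.le_sup' r (Finset.mem_range.mpr (by omega))

private lemma pM_mono (r : ℕ → ℝ) {a b : ℕ} (h : a ≤ b) : pM r a ≤ pM r b :=
  Finset.sup'_le _ _ fun s hs => le_pM r (by have := Finset.mem_range.mp hs; omega)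

private lemma pM_succ (r : ℕ → ℝ) (t : ℕ) : pM r (t + 1) = max (pM r t) (r (t + 1)) := by
  apply le_antisymm
  · apply Finset.sup'_le
    intro s hs
    have hs' := Finset.mem_range.mp hs
    rcases Nat.lt_or_ge s (t + 1) with h | h
    · exact le_trans (le_pM r (by omega)) (le_max_left _ _)
    · have : s = t + 1 := by omega
      subst this
      exact le_max_right _ _
  · exact max_le (pM_mono r (Nat.le_succ t)) (le_pM r (le_refl (t + 1)))

private lemma pM_le_pS (r : ℕ → ℝ) (hr : ∀ t, 0 ≤ r t) (t : ℕ) : pM r t ≤ pS r t :=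
  Finset.sup'_le _ _ fun s hs => Finset.single_le_sum (fun i _ => hr i) hs

private lemma pS_nonneg (r : ℕ → ℝ) (hr : ∀ t, 0 ≤ r t) (t : ℕ) : 0 ≤ pS r t :=
  Finset.sum_nonneg fun i _ => hr i

private lemma keyineq (M ω η m S ρ : ℝ)
    (hηpos : 0 < η) (hη1 : η ≤ 3 / 4)
    (hη4 : η * (4 * M) = 3 * M - M ^ 2 - 1 / 4)
    (hm1 : 1 < m) (hm2 : 2 * |ω| ≤ m)
    (hm3 : 4 * |ω| * (2 * M + 1) ≤ (3 * M - M ^ 2 - 1 / 4) * m)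
    (hmS : m ≤ S) (hS0 : 0 ≤ S)
    (hSu : S ≤ 2 * M * m + 2 * ω)
    (hρle : ρ ≤ M * m - S / 2 + ω) :
    S * ρ ≤ (S + (1 - η) * ρ) * m := by
  have hm0 : (0:ℝ) < m := by linarith
  have hηm : 0 ≤ η * m := mul_nonneg hηpos.le hm0.le
  have hnn : 0 ≤ S - (1 - η) * m := by linarith
  have h1 : ρ * (S - (1 - η) * m) ≤ (M * m - S / 2 + ω) * (S - (1 - η) * m) :=
    mul_le_mul_of_nonneg_right hρle hnn
  have e1 : (M * m - S / 2) * (S - m) ≤ S * m - (3 * M - M ^ 2 - 1 / 4) * m ^ 2 / 2 := by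
    nlinarith [sq_nonneg (2 * S - (2 * M - 1) * m)]
  have hη4m : η * (4 * M) * m ^ 2 = (3 * M - M ^ 2 - 1 / 4) * m ^ 2 := by rw [hη4]
  have hηSm : 0 ≤ η * S * m := mul_nonneg (mul_nonneg hηpos.le hS0) hm0.le
  have e2 : η * (M * m - S / 2) * m ≤ (3 * M - M ^ 2 - 1 / 4) * m ^ 2 / 4 := by
    linarith [hη4m, hηSm]
  have hb : S - (1 - η) * m ≤ (2 * M + 1) * m := by
    have hω := le_abs_self ω
    linarith [mul_nonneg (by linarith : (0:ℝ) ≤ 1 - η) hm0.le]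
  have e3 : ω * (S - (1 - η) * m) ≤ (3 * M - M ^ 2 - 1 / 4) * m ^ 2 / 4 := by
    have c1 : ω * (S - (1 - η) * m) ≤ |ω| * (S - (1 - η) * m) :=
      mul_le_mul_of_nonneg_right (le_abs_self ω) hnn
    have c2 : |ω| * (S - (1 - η) * m) ≤ |ω| * ((2 * M + 1) * m) :=
      mul_le_mul_of_nonneg_left hb (abs_nonneg ω)
    have c3 := mul_le_mul_of_nonneg_right hm3 hm0.le
    linarith [c1, c2, c3]
  have h2 : (M * m - S / 2 + ω) * (S - (1 - η) * m) ≤ S * m := by linarith [e1, e2, e3]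
  linarith [h1, h2]

/-- If 0 < M < 3/2 + √2 and the nonnegative sequence r satisfies
r_{t+1} ≤ M·max_{0≤s≤t} r_s − (1/2)·∑_{s=0}^t r_s + ω for all t ≥ t₀,
then ∑ r_t < ∞. -/
theorem stmt2 (M ω : ℝ) (t₀ : ℕ) (r : ℕ → ℝ)
    (hM : 0 < M) (hM' : M < 3 / 2 + Real.sqrt 2)
    (hr : ∀ t, 0 ≤ r t)
    (hrec : ∀ t, t₀ ≤ t →
      r (t + 1) ≤ M * (Finset.range (t + 1)).sup'
          (Finset.nonempty_range_iff.mpr t.succ_ne_zero) r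
        - (1 / 2) * ∑ s ∈ Finset.range (t + 1), r s + ω) :
    Summable r := by
  by_contra hns
  have hrec' : ∀ t, t₀ ≤ t → r (t + 1) ≤ M * pM r t - pS r t / 2 + ω := by
    intro t ht
    have h := hrec t ht
    unfold pM pS
    linarith
  have hSle : ∀ t, t₀ ≤ t → pS r t ≤ 2 * M * pM r t + 2 * ω := by
    intro t ht
    have h1 := hrec' t ht
    have h2 := hr (t + 1)
    linarith
  -- max is unbounded
  have hMunb : ∀ B : ℝ, ∃ t, t₀ ≤ t ∧ B < pM r t := by
    intro B
    have hsum : ∃ n, 2 * M * B + 2 * ω < ∑ s ∈ Finset.range n, r s := by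
      by_contra h
      push_neg at h
      exact hns (summable_of_sum_range_le hr h)
    obtain ⟨n, hn⟩ := hsum
    refine ⟨n + t₀, Nat.le_add_left _ _, ?_⟩
    have hle : ∑ s ∈ Finset.range n, r s ≤ pS r (n + t₀) :=
      Finset.sum_le_sum_of_subset_of_nonneg
        (Finset.range_subset_range.mpr (by omega)) (fun i _ _ => hr i)
    have h2 := hSle (n + t₀) (Nat.le_add_left _ _)
    by_contra hc
    push_neg at hc
    have := mul_le_mul_of_nonneg_left hc (by linarith : (0:ℝ) ≤ 2 * M)
    linarith
  -- record extraction
  have hrecord : ∀ a b : ℕ, a ≤ b → pM r a < pM r b →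
      ∃ v, a ≤ v ∧ pM r v < pM r (v + 1) := by
    intro a b
    induction b with
    | zero =>
      intro h1 h2
      have : a = 0 := by omega
      subst this
      exact absurd h2 (lt_irrefl _)
    | succ b ih =>
      intro hab hlt
      by_cases hab' : a ≤ b
      · rcases lt_or_ge (pM r b) (pM r (b + 1)) with h | h
        · exact ⟨b, hab', h⟩
        · exact ih hab' (lt_of_lt_of_le hlt h)
      · have : a = b + 1 := by omega
        subst this
        exact absurd hlt (lt_irrefl _)
  rcases lt_or_ge M (3 / 2) with hMsmall | hMbig
  · -- easy case : M < 3/2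
    have h32 : (0:ℝ) < 3 / 2 - M := by linarith
    obtain ⟨T, hT₀, hTB⟩ := hMunb (|ω| / (3 / 2 - M))
    obtain ⟨u, hu₀, huB⟩ := hMunb (pM r T)
    have hTu : T ≤ u := by
      by_contra h
      push_neg at h
      exact absurd (pM_mono r h.le) (not_le.mpr huB)
    obtain ⟨v, hTv, hv⟩ := hrecord T u hTu huB
    have hv₀ : t₀ ≤ v := le_trans hT₀ hTv
    have h1 := hrec' v hv₀
    have h2 := pM_le_pS r hr v
    rw [pM_succ] at hv
    have h4 : pM r v < r (v + 1) := (lt_max_iff.mp hv).resolve_left (lt_irrefl _)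
    have h5 : pM r T ≤ pM r v := pM_mono r hTv
    have h6 : (3 / 2 - M) * pM r v < |ω| := by
      have := le_abs_self ω
      linarith
    rw [div_lt_iff₀ h32] at hTB
    linarith [mul_le_mul_of_nonneg_right h5 h32.le]
  · -- main case : 3/2 ≤ M < 3/2 + √2
    have hκ : 0 < 3 * M - M ^ 2 - 1 / 4 := by
      have hs : Real.sqrt 2 ^ 2 = 2 := Real.sq_sqrt (by norm_num)
      nlinarith [Real.sqrt_nonneg 2]
    set η : ℝ := (3 * M - M ^ 2 - 1 / 4) / (4 * M) with hηdef
    clear_value η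
    have hM4 : (0:ℝ) < 4 * M := by linarith
    have hηpos : 0 < η := by rw [hηdef]; exact div_pos hκ hM4
    have hη4 : η * (4 * M) = 3 * M - M ^ 2 - 1 / 4 := by
      rw [hηdef]; field_simp
    have hη1 : η ≤ 3 / 4 := by
      rw [hηdef, div_le_iff₀ hM4]
      nlinarith
    set mst : ℝ := max 1 (max (2 * |ω|) (4 * |ω| * (2 * M + 1) / (3 * M - M ^ 2 - 1 / 4)))
      with hmstdef
    clear_value mst
    obtain ⟨T, hT₀, hTm⟩ := hMunb mst
    -- basic bounds for t ≥ T
    have hbnd : ∀ t, T ≤ t → 1 < pM r t ∧ 2 * |ω| ≤ pM r t ∧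
        4 * |ω| * (2 * M + 1) ≤ (3 * M - M ^ 2 - 1 / 4) * pM r t := by
      intro t ht
      have hm : mst < pM r t := lt_of_lt_of_le hTm (pM_mono r ht)
      have h1 : (1:ℝ) ≤ mst := by rw [hmstdef]; exact le_max_left _ _
      have h2 : 2 * |ω| ≤ mst := by
        rw [hmstdef]; exact le_trans (le_max_left _ _) (le_max_right _ _)
      have h3 : 4 * |ω| * (2 * M + 1) / (3 * M - M ^ 2 - 1 / 4) ≤ mst := by
        rw [hmstdef]; exact le_trans (le_max_right _ _) (le_max_right _ _)
      rw [div_le_iff₀ hκ] at h3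
      refine ⟨by linarith, by linarith, ?_⟩
      have h4 := mul_le_mul_of_nonneg_right hm.le hκ.le
      linarith
    -- c t ≤ 2M + 1 for t ≥ T
    have hcub : ∀ t, T ≤ t → pS r t / pM r t ≤ 2 * M + 1 := by
      intro t ht
      obtain ⟨hm1, hm2, _⟩ := hbnd t ht
      have hS := hSle t (le_trans hT₀ ht)
      rw [div_le_iff₀ (by linarith)]
      have hω := le_abs_self ω
      linarith
    -- record step gains η
    have hstepB : ∀ t, T ≤ t → pM r t < r (t + 1) →
        pS r t / pM r t + η ≤ pS r (t + 1) / pM r (t + 1) := by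
      intro t ht hrc
      obtain ⟨hm1, hm2, hm3⟩ := hbnd t ht
      have hm0 : (0:ℝ) < pM r t := by linarith
      have hmS : pM r t ≤ pS r t := pM_le_pS r hr t
      have hS0 : 0 ≤ pS r t := pS_nonneg r hr t
      have hSu : pS r t ≤ 2 * M * pM r t + 2 * ω := hSle t (le_trans hT₀ ht)
      have hρle : r (t + 1) ≤ M * pM r t - pS r t / 2 + ω := hrec' t (le_trans hT₀ ht)
      have hρpos : 0 < r (t + 1) := lt_trans hm0 hrc
      set m := pM r t with hmdef
      set S := pS r t with hSdef
      set ρ := r (t + 1) with hρdef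
      clear_value m S ρ
      have hηm : 0 ≤ η * m := mul_nonneg hηpos.le hm0.le
      have hnn : 0 ≤ S - (1 - η) * m := by linarith
      have hkey : S * ρ ≤ (S + (1 - η) * ρ) * m :=
        keyineq M ω η m S ρ hηpos hη1 hη4 hm1 hm2 hm3 hmS hS0 hSu hρle
      have hpM1 : pM r (t + 1) = ρ := by
        rw [pM_succ, ← hmdef, ← hρdef]; exact max_eq_right hrc.le
      have hpS1 : pS r (t + 1) = S + ρ := by rw [pS_succ, ← hSdef, ← hρdef]
      rw [hpM1, hpS1, div_add' _ _ _ hm0.ne', div_le_div_iff₀ hm0 hρpos]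
      linarith [hkey]
    -- every step is nondecreasing
    have hstepA : ∀ t, T ≤ t → pS r t / pM r t ≤ pS r (t + 1) / pM r (t + 1) := by
      intro t ht
      rcases le_or_gt (r (t + 1)) (pM r t) with h | h
      · have hpM1 : pM r (t + 1) = pM r t := by rw [pM_succ]; exact max_eq_left h
        have hm0 : (0:ℝ) < pM r t := by linarith [(hbnd t ht).1]
        rw [hpM1, pS_succ, div_le_div_iff₀ hm0 hm0]
        nlinarith [hr (t + 1), hm0.le]
      · linarith [hstepB t ht h, hηpos]
    -- monotone chain
    have hcm : ∀ a b : ℕ, T ≤ a → a ≤ b → pS r a / pM r a ≤ pS r b / pM r b := by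
      intro a b ha hab
      induction b, hab using Nat.le_induction with
      | base => exact le_rfl
      | succ n hn ih => exact le_trans ih (hstepA n (le_trans ha hn))
    -- growth
    have hgrow : ∀ n : ℕ, ∃ t, T ≤ t ∧ pS r T / pM r T + n * η ≤ pS r t / pM r t := by
      intro n
      induction n with
      | zero => exact ⟨T, le_rfl, by simp⟩
      | succ n ih =>
        obtain ⟨t, hTt, hct⟩ := ih
        obtain ⟨u, hu₀, huB⟩ := hMunb (pM r t)
        have htu : t ≤ u := by
          by_contra h
          push_neg at h
          exact absurd (pM_mono r h.le) (not_le.mpr huB)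
        obtain ⟨v, htv, hv⟩ := hrecord t u htu huB
        have hTv : T ≤ v := le_trans hTt htv
        rw [pM_succ] at hv
        have hρ : pM r v < r (v + 1) := (lt_max_iff.mp hv).resolve_left (lt_irrefl _)
        refine ⟨v + 1, le_trans hTv (Nat.le_succ v), ?_⟩
        have h1 := hcm t v hTt htv
        have h2 := hstepB v hTv hρ
        push_cast
        linarith
    obtain ⟨n, hn⟩ := exists_nat_gt ((2 * M + 1 - pS r T / pM r T) / η)
    obtain ⟨t, hTt, hct⟩ := hgrow n
    have hb := hcub t hTt
    rw [div_lt_iff₀ hηpos] at hn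
    linarith
end

section
/- Let 0 < M < 3/2 + √2, t₀ ≥ 0, ρ ≥ 0, and ω ∈ ℝ. Suppose two nonnegative sequences ⟨p_t⟩ and ⟨q_t⟩ satisfy, for all t ≥ t₀, p_{t+1} ≤ (M·max{max_{1≤s≤t} p_s, max_{1≤s≤t} q_s, ρ} − ρ/2 − (1/2)∑_{s=1}^t (p_s + q_s) + ω)⁺ and the analogous inequality for q_{t+1}. Then ∑_{s=1}^∞ (p_s + q_s) < ∞. -/
open Finset Filter

/-- max{max_{1≤s≤t} p_s, max_{1≤s≤t} q_s, ρ}. -/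
noncomputable def pqMax (p q : ℕ → ℝ) (ρ : ℝ) (t : ℕ) : ℝ :=
  (Finset.Icc 1 t).fold max ρ (fun s => max (p s) (q s))

lemma pqMax_zero (p q : ℕ → ℝ) (ρ : ℝ) : pqMax p q ρ 0 = ρ := by
  simp [pqMax]

lemma pqMax_succ (p q : ℕ → ℝ) (ρ : ℝ) (t : ℕ) :
    pqMax p q ρ (t + 1) = max (max (p (t+1)) (q (t+1))) (pqMax p q ρ t) := by
  unfold pqMax
  have h : Finset.Icc 1 (t+1) = insert (t+1) (Finset.Icc 1 t) := by
    ext x; simp [Nat.lt_succ_iff]; omega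
  rw [h, Finset.fold_insert (by simp)]

lemma pqMax_le_succ (p q : ℕ → ℝ) (ρ : ℝ) (t : ℕ) :
    pqMax p q ρ t ≤ pqMax p q ρ (t + 1) := by
  rw [pqMax_succ]; exact le_max_right _ _

lemma pqMax_mono (p q : ℕ → ℝ) (ρ : ℝ) : Monotone (pqMax p q ρ) :=
  monotone_nat_of_le_succ (pqMax_le_succ p q ρ)

lemma le_pqMax (p q : ℕ → ℝ) (ρ : ℝ) (t : ℕ) : ρ ≤ pqMax p q ρ t := by
  induction t with
  | zero => rw [pqMax_zero]
  | succ t ih => exact ih.trans (pqMax_le_succ p q ρ t)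

/-- Ratio contradiction lemma: with complex characteristic roots, no
positive monotone unbounded sequence satisfies the linear recurrence
inequality `T (k+2) ≤ α T (k+1) - M T k + ω`. -/
lemma ratio_lemma (α M ω : ℝ) (hM : 0 < M) (hα : α ^ 2 < 4 * M)
    (T : ℕ → ℝ) (hT0 : 0 < T 0) (hle : ∀ k, T k ≤ T (k + 1))
    (htop : Tendsto T atTop atTop)
    (hrec : ∀ k, T (k + 2) ≤ α * T (k + 1) - M * T k + ω) : False := by
  have hmono : Monotone T := monotone_nat_of_le_succ hle
  have hTpos : ∀ k, 0 < T k := fun k => hT0.trans_le (hmono (Nat.zero_le k))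
  set r : ℕ → ℝ := fun k => T (k + 1) / T k with hr
  have h1 : ∀ k, 1 ≤ r k := fun k => (one_le_div (hTpos k)).2 (hle k)
  have hrpos : ∀ k, 0 < r k := fun k => lt_of_lt_of_le one_pos (h1 k)
  have hstep : ∀ k, r (k + 1) ≤ α - M / r k + |ω| / T (k + 1) := by
    intro k
    have hM' : M / r k = M * T k / T (k + 1) := by
      rw [hr]
      field_simp
    have h2 : (α - M / r k) * T (k + 1) = α * T (k+1) - M * T k := by
      rw [hM', sub_mul, div_mul_cancel₀ _ (ne_of_gt (hTpos (k+1)))]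
    have h3 : r (k+1) * T (k+1) = T (k+2) := by
      rw [hr]
      exact div_mul_cancel₀ _ (ne_of_gt (hTpos (k+1)))
    have h4 : (|ω| / T (k+1)) * T (k+1) = |ω| :=
      div_mul_cancel₀ _ (ne_of_gt (hTpos (k+1)))
    have h5 : r (k+1) * T (k+1) ≤ (α - M / r k + |ω| / T (k+1)) * T (k+1) := by
      rw [h3, add_mul, h2, h4]
      have := hrec k
      have := le_abs_self ω
      linarith
    exact le_of_mul_le_mul_right (by linarith [h5]) (hTpos (k+1))
  set δ : ℝ := M - α ^ 2 / 4 with hδdef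
  have hδ : 0 < δ := by simp [hδdef]; nlinarith
  have hkey : ∀ x : ℝ, 1 ≤ x → α - M / x ≤ x - δ / x := by
    intro x hx
    have hx0 : 0 < x := lt_of_lt_of_le one_pos hx
    have h5 : (α - M / x) * x ≤ (x - δ / x) * x := by
      have e1 : (α - M / x) * x = α * x - M := by field_simp
      have e2 : (x - δ / x) * x = x * x - δ := by field_simp
      rw [e1, e2, hδdef]
      nlinarith [sq_nonneg (x - α / 2)]
    exact le_of_mul_le_mul_right h5 hx0
  set R : ℝ := α + |ω| / T 1 with hRdef
  have hR : ∀ k, r (k + 1) ≤ R := by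
    intro k
    have h6 : |ω| / T (k+1) ≤ |ω| / T 1 := by
      gcongr
      · exact hTpos 1
      · exact hmono (by omega)
    have h7 : 0 ≤ M / r k := le_of_lt (div_pos hM (hrpos k))
    have := hstep k
    simp only [hRdef]
    linarith
  have hR1 : 1 ≤ R := le_trans (h1 1) (hR 0)
  have hRpos : 0 < R := lt_of_lt_of_le one_pos hR1
  have hdec : ∀ k, r (k + 2) ≤ r (k + 1) - δ / R + |ω| / T (k + 2) := by
    intro k
    have hs := hstep (k+1)
    have h8 : α - M / r (k+1) ≤ r (k+1) - δ / r (k+1) := hkey _ (h1 (k+1))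
    have h9 : δ / R ≤ δ / r (k+1) := by
      gcongr
      · exact hrpos (k+1)
      · exact hR k
    linarith
  obtain ⟨K, hK⟩ := eventually_atTop.mp (htop.eventually_ge_atTop (2 * R * |ω| / δ + 1))
  have hsmall : ∀ k, K ≤ k → |ω| / T k ≤ δ / (2 * R) := by
    intro k hk
    have hTk := hK k hk
    have hTkpos := hTpos k
    rw [div_le_div_iff₀ hTkpos (by positivity)]
    have h0 : 0 ≤ |ω| := abs_nonneg ω
    have e : δ * (2 * R * |ω| / δ + 1) = 2 * R * |ω| + δ := by field_simp
    have h2 : δ * (2 * R * |ω| / δ + 1) ≤ δ * T k := mul_le_mul_of_nonneg_left hTk hδ.le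
    have h3 : 2 * R * |ω| + δ ≤ δ * T k := e ▸ h2
    linarith
  have hdec2 : ∀ k, K ≤ k → r (k + 2) ≤ r (k + 1) - δ / (2 * R) := by
    intro k hk
    have h' := hsmall (k+2) (by omega)
    have hhalf : δ / R = δ / (2*R) + δ / (2*R) := by field_simp; ring
    linarith [hdec k]
  have hiter : ∀ n : ℕ, r (K + 2 + n) ≤ r (K + 2) - n * (δ / (2 * R)) := by
    intro n
    induction n with
    | zero => simp
    | succ n ih =>
      have h := hdec2 (K + n + 1) (by omega)
      have e1 : K + n + 1 + 2 = K + 2 + (n + 1) := by omega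
      have e2 : K + n + 1 + 1 = K + 2 + n := by omega
      rw [e1, e2] at h
      have e3 : ((n : ℝ) + 1) * (δ / (2*R)) = n * (δ / (2*R)) + δ / (2*R) := by ring
      push_cast
      linarith
  obtain ⟨n, hn⟩ := exists_nat_gt ((r (K + 2) - 1) / (δ / (2 * R)))
  have hd : 0 < δ / (2 * R) := by positivity
  have hlt : r (K + 2) - 1 < n * (δ / (2*R)) := by
    rw [div_lt_iff₀ hd] at hn; linarith
  have hA := hiter n
  have hB := h1 (K + 2 + n)
  linarith

lemma Icc_succ_insert (t : ℕ) : Finset.Icc 1 (t + 1) = insert (t + 1) (Finset.Icc 1 t) := by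
  ext x; simp [Nat.lt_succ_iff]; omega

lemma sum_Icc_succ (F : ℕ → ℝ) (t : ℕ) :
    ∑ s ∈ Finset.Icc 1 (t + 1), F s = (∑ s ∈ Finset.Icc 1 t, F s) + F (t + 1) := by
  rw [Icc_succ_insert, Finset.sum_insert (by simp)]
  ring

lemma main_aux (M ρ ω : ℝ) (t₀ : ℕ) (p q : ℕ → ℝ)
    (hM : (3:ℝ)/2 ≤ M) (hM' : M < 3 / 2 + Real.sqrt 2) (hρ : 0 ≤ ρ)
    (hp : ∀ t, 0 ≤ p t) (hq : ∀ t, 0 ≤ q t)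
    (hrecp : ∀ t, t₀ ≤ t →
      p (t + 1) ≤ max (M * pqMax p q ρ t - ρ / 2
        - (1 / 2) * ∑ s ∈ Finset.Icc 1 t, (p s + q s) + ω) 0)
    (hrecq : ∀ t, t₀ ≤ t →
      q (t + 1) ≤ max (M * pqMax p q ρ t - ρ / 2
        - (1 / 2) * ∑ s ∈ Finset.Icc 1 t, (p s + q s) + ω) 0) :
    Summable (fun s => p s + q s) := by
  classical
  have hM0 : (0:ℝ) < M := by linarith
  set f : ℕ → ℝ := fun s => p s + q s with hf
  have hf0 : ∀ s, 0 ≤ f s := fun s => add_nonneg (hp s) (hq s)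
  by_contra hsum
  set S : ℕ → ℝ := fun t => ∑ s ∈ Finset.Icc 1 t, f s with hSdef
  set B : ℕ → ℝ := fun t => pqMax p q ρ t with hBdef
  have hSsucc : ∀ t, S (t + 1) = S t + f (t + 1) := fun t => sum_Icc_succ f t
  have hSmono : Monotone S :=
    monotone_nat_of_le_succ (fun t => by rw [hSsucc]; linarith [hf0 (t + 1)])
  have hρB : ∀ t, ρ ≤ B t := fun t => le_pqMax p q ρ t
  have hB0 : ∀ t, 0 ≤ B t := fun t => le_trans hρ (hρB t)
  have hBmono : Monotone B := pqMax_mono p q ρ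
  have hBsucc : ∀ t, B (t + 1) = max (max (p (t + 1)) (q (t + 1))) (B t) :=
    fun t => pqMax_succ p q ρ t
  have hrecP : ∀ t, t₀ ≤ t → p (t + 1) ≤ max (M * B t - ρ / 2 - (1 / 2) * S t + ω) 0 := hrecp
  have hrecQ : ∀ t, t₀ ≤ t → q (t + 1) ≤ max (M * B t - ρ / 2 - (1 / 2) * S t + ω) 0 := hrecq
  have hStop : Tendsto S atTop atTop := by
    have h0 := (not_summable_iff_tendsto_nat_atTop_of_nonneg hf0).1 hsum
    have key : ∀ t, ∑ i ∈ Finset.range (t + 1), f i = f 0 + S t := by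
      intro t
      induction t with
      | zero => simp [hSdef]
      | succ t ih => rw [Finset.sum_range_succ, ih, hSsucc]; ring
    have h1 : Tendsto (fun t => ∑ i ∈ Finset.range (t + 1), f i) atTop atTop :=
      h0.comp (tendsto_add_atTop_nat 1)
    have h2 : Tendsto (fun t => f 0 + S t) atTop atTop := by
      rwa [funext key] at h1
    have h3 := tendsto_atTop_add_const_right atTop (-(f 0)) h2
    have e : (fun t => f 0 + S t + -(f 0)) = S := by funext t; ring
    rwa [e] at h3
  by_cases hrecord : ∀ n, ∃ m, B n < B m
  case neg =>
    push_neg at hrecord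
    obtain ⟨n, hC⟩ := hrecord
    obtain ⟨t₁, ht₁⟩ := eventually_atTop.mp
      (hStop.eventually_ge_atTop (2 * (M * B n + |ω|) + 1))
    set t' := max t₁ t₀ with ht'
    have hSt' : 2 * (M * B n + |ω|) + 1 ≤ S t' := ht₁ t' (le_max_left _ _)
    have hzero : ∀ k, S (t' + k) = S t' := by
      intro k
      induction k with
      | zero => rfl
      | succ k ih =>
        have ht : t₀ ≤ t' + k := le_trans (le_max_right _ _) (Nat.le_add_right _ _)
        have hcneg : M * B (t' + k) - ρ / 2 - (1 / 2) * S (t' + k) + ω ≤ 0 := by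
          have h1 : M * B (t' + k) ≤ M * B n :=
            mul_le_mul_of_nonneg_left (hC _) hM0.le
          have h2 := le_abs_self ω
          rw [ih]
          linarith
        have hp0 := hrecP (t' + k) ht
        have hq0 := hrecQ (t' + k) ht
        rw [max_eq_right hcneg] at hp0 hq0
        have hfz : f (t' + k + 1) = 0 :=
          le_antisymm (by simp only [hf]; linarith) (hf0 _)
        have : S (t' + k + 1) = S (t' + k) + f (t' + k + 1) := hSsucc (t' + k)
        rw [show t' + (k + 1) = t' + k + 1 by omega, this, hfz, ih]
        ring
    obtain ⟨t₂, ht₂⟩ := eventually_atTop.mp (hStop.eventually_gt_atTop (S t'))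
    have h4 := ht₂ (max t₂ t') (le_max_left _ _)
    have h5 : S (max t₂ t') = S t' := by
      rw [show max t₂ t' = t' + (max t₂ t' - t') by omega, hzero]
    rw [h5] at h4
    exact lt_irrefl _ h4
  case pos =>
    set g : ℕ → ℕ := fun n => Nat.find (hrecord n) with hgdef
    have hg1 : ∀ n, B n < B (g n) := fun n => Nat.find_spec (hrecord n)
    have hg2 : ∀ n m, m < g n → B m ≤ B n := fun n m hm =>
      not_lt.1 (Nat.find_min (hrecord n) hm)
    have hg3 : ∀ n, n < g n := by
      intro n
      by_contra hcon
      push_neg at hcon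
      exact absurd (hBmono hcon) (not_le.2 (hg1 n))
    set u : ℕ → ℕ := fun k => g^[k] t₀ with hu
    have husucc : ∀ k, u (k + 1) = g (u k) := fun k => Function.iterate_succ_apply' g k t₀
    have humono : StrictMono u :=
      strictMono_nat_of_lt_succ (fun k => by rw [husucc]; exact hg3 (u k))
    have hut0 : ∀ k, t₀ ≤ u k := fun k => by
      have : u 0 = t₀ := rfl
      calc t₀ = u 0 := this.symm
        _ ≤ u k := humono.monotone (Nat.zero_le k)
    have hu1 : ∀ k, 1 ≤ u (k + 1) := fun k =>
      lt_of_le_of_lt (Nat.zero_le (u k)) (humono (show k < k + 1 by omega))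
    set h : ℕ → ℝ := fun k => B (u k) with hh
    have hhlt : ∀ k, h k < h (k + 1) := by
      intro k
      show B (u k) < B (u (k + 1))
      rw [husucc]
      exact hg1 (u k)
    have hhmono : Monotone h := monotone_nat_of_le_succ (fun k => (hhlt k).le)
    have hh0 : ∀ k, 0 ≤ h k := fun k => hB0 (u k)
    have hhpos : ∀ k, 0 < h (k + 1) := fun k => lt_of_le_of_lt (hh0 k) (hhlt k)
    have hBpred : ∀ k, B (u (k + 1) - 1) = h k := by
      intro k
      apply le_antisymm
      · apply hg2 (u k)
        rw [← husucc]
        have h9 := hu1 k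
        omega
      · show B (u k) ≤ B (u (k + 1) - 1)
        apply hBmono
        have := humono (show k < k + 1 by omega)
        omega
    have hm : ∀ k, h (k + 1) ≤ max (p (u (k + 1))) (q (u (k + 1))) := by
      intro k
      obtain ⟨v, hv⟩ : ∃ v, u (k + 1) = v + 1 := ⟨u (k + 1) - 1, by have := hu1 k; omega⟩
      have eB : B (u (k + 1)) = max (max (p (u (k + 1))) (q (u (k + 1)))) (B (u (k + 1) - 1)) := by
        rw [hv]
        simp only [Nat.add_sub_cancel]
        exact hBsucc v
      have h2 : h (k + 1) ≤ max (max (p (u (k + 1))) (q (u (k + 1)))) (h k) := by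
        rw [← hBpred k]
        exact le_of_eq eB
      rcases le_max_iff.mp h2 with h3 | h3
      · exact h3
      · exact absurd h3 (not_le.2 (hhlt k))
    have hkey : ∀ k, h (k + 1) ≤ M * h k - ρ / 2 - (1 / 2) * S (u (k + 1) - 1) + ω := by
      intro k
      have ht : t₀ ≤ u (k + 1) - 1 := by
        have h1 := hut0 k
        have h2 := humono (show k < k + 1 by omega)
        omega
      have e0 : u (k + 1) - 1 + 1 = u (k + 1) := by
        have := hu1 k
        omega
      have hP := hrecP (u (k + 1) - 1) ht
      have hQ := hrecQ (u (k + 1) - 1) ht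
      rw [e0, hBpred k] at hP hQ
      have h3 : h (k + 1) ≤ max (M * h k - ρ / 2 - (1 / 2) * S (u (k + 1) - 1) + ω) 0 :=
        le_trans (hm k) (max_le hP hQ)
      rcases le_or_gt (M * h k - ρ / 2 - (1 / 2) * S (u (k + 1) - 1) + ω) 0 with hc | hc
      · rw [max_eq_right hc] at h3
        exact absurd h3 (not_le.2 (hhpos k))
      · rwa [max_eq_left hc.le] at h3
    set T : ℕ → ℝ := fun k => ∑ j ∈ Finset.Icc 1 k, h j with hTdef
    have hTsucc : ∀ k, T (k + 1) = T k + h (k + 1) := fun k => sum_Icc_succ h k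
    have hT0 : T 0 = 0 := by simp [hTdef]
    have hT1 : T 1 = h 1 := by rw [show (1:ℕ) = 0 + 1 from rfl, hTsucc, hT0]; ring
    have hTleS : ∀ k, T k ≤ S (u (k + 1) - 1) := by
      intro k
      have step1 : T k ≤ ∑ j ∈ Finset.Icc 1 k, f (u j) := by
        apply Finset.sum_le_sum
        intro j hj
        obtain ⟨j', rfl⟩ : ∃ j', j = j' + 1 := by
          rcases Finset.mem_Icc.mp hj with ⟨h1, _⟩
          exact ⟨j - 1, by omega⟩
        refine le_trans (hm j') ?_
        simp only [hf]
        exact max_le (le_add_of_nonneg_right (hq _)) (le_add_of_nonneg_left (hp _))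
      have step2 : ∑ j ∈ Finset.Icc 1 k, f (u j)
          = ∑ s ∈ (Finset.Icc 1 k).image u, f s :=
        (Finset.sum_image (fun a _ b _ hab => humono.injective hab)).symm
      have step3 : ∑ s ∈ (Finset.Icc 1 k).image u, f s ≤ S (u (k + 1) - 1) := by
        apply Finset.sum_le_sum_of_subset_of_nonneg
        · intro s hs
          obtain ⟨j, hj, rfl⟩ := Finset.mem_image.mp hs
          rcases Finset.mem_Icc.mp hj with ⟨h1, h2⟩
          have h3 : j ≤ u j := humono.le_apply
          have h4 : u j ≤ u k := humono.monotone h2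
          have h5 : u k < u (k + 1) := humono (show k < k + 1 by omega)
          exact Finset.mem_Icc.mpr ⟨by omega, by omega⟩
        · intro i _ _
          exact hf0 i
      calc T k ≤ ∑ j ∈ Finset.Icc 1 k, f (u j) := step1
        _ = ∑ s ∈ (Finset.Icc 1 k).image u, f s := step2
        _ ≤ S (u (k + 1) - 1) := step3
    have hTrec : ∀ k, T (k + 2) ≤ (M + 1 / 2) * T (k + 1) - M * T k + ω := by
      intro k
      have e1 : T (k + 2) = T (k + 1) + h (k + 2) := hTsucc (k + 1)
      have e2 : T (k + 1) = T k + h (k + 1) := hTsucc k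
      have k1 := hkey (k + 1)
      have k2 := hTleS (k + 1)
      simp only [show k + 1 + 1 = k + 2 from rfl] at k1 k2
      have e3 : M * T (k + 1) = M * T k + M * h (k + 1) := by rw [e2]; ring
      linarith
    have hα : (M + 1 / 2) ^ 2 < 4 * M := by
      have hs2 : Real.sqrt 2 ^ 2 = 2 := Real.sq_sqrt (by norm_num)
      have hs0 : (0:ℝ) < Real.sqrt 2 := Real.sqrt_pos.2 (by norm_num)
      nlinarith [mul_pos (show (0:ℝ) < 3 / 2 + Real.sqrt 2 - M by linarith)
        (show (0:ℝ) < M - 3 / 2 + Real.sqrt 2 by linarith)]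
    apply ratio_lemma (M + 1 / 2) M ω hM0 hα (fun k => T (k + 1))
    · show (0:ℝ) < T 1
      rw [hT1]
      exact hhpos 0
    · intro k
      show T (k + 1) ≤ T (k + 1 + 1)
      rw [hTsucc (k + 1)]
      linarith [hh0 (k + 2)]
    · have bound : ∀ k : ℕ, ((k : ℝ) + 1) * h 1 ≤ T (k + 1) := by
        intro k
        have : ∑ j ∈ Finset.Icc 1 (k + 1), h 1 ≤ ∑ j ∈ Finset.Icc 1 (k + 1), h j := by
          apply Finset.sum_le_sum
          intro j hj
          exact hhmono (Finset.mem_Icc.mp hj).1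
        rw [Finset.sum_const, Nat.card_Icc] at this
        simpa [Nat.add_sub_cancel, nsmul_eq_mul] using this
      have h1' : Tendsto (fun k : ℕ => ((k : ℝ) + 1)) atTop atTop :=
        tendsto_atTop_add_const_right atTop 1 tendsto_natCast_atTop_atTop
      have h2' : Tendsto (fun k : ℕ => ((k : ℝ) + 1) * h 1) atTop atTop :=
        h1'.atTop_mul_const (hhpos 0)
      exact tendsto_atTop_mono bound h2'
    · intro k
      exact hTrec (k + 1)

/-- Key sequence lemma: if 0 < M < 3/2+√2 and the nonnegative sequences p, q
satisfy the coupled positive-part recursions for all t ≥ t₀, then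
∑_{s=1}^∞ (p_s + q_s) < ∞. -/
theorem stmt3 (M ρ ω : ℝ) (t₀ : ℕ) (p q : ℕ → ℝ)
    (hM : 0 < M) (hM' : M < 3 / 2 + Real.sqrt 2) (hρ : 0 ≤ ρ)
    (hp : ∀ t, 0 ≤ p t) (hq : ∀ t, 0 ≤ q t)
    (hrecp : ∀ t, t₀ ≤ t →
      p (t + 1) ≤ max (M * pqMax p q ρ t - ρ / 2
        - (1 / 2) * ∑ s ∈ Finset.Icc 1 t, (p s + q s) + ω) 0)
    (hrecq : ∀ t, t₀ ≤ t →
      q (t + 1) ≤ max (M * pqMax p q ρ t - ρ / 2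
        - (1 / 2) * ∑ s ∈ Finset.Icc 1 t, (p s + q s) + ω) 0) :
    Summable (fun s => p s + q s) := by
  have hs0 : (0:ℝ) < Real.sqrt 2 := Real.sqrt_pos.2 (by norm_num)
  have key : ∀ t, M * pqMax p q ρ t ≤ max M (3/2) * pqMax p q ρ t := fun t =>
    mul_le_mul_of_nonneg_right (le_max_left _ _) (le_trans hρ (le_pqMax p q ρ t))
  apply main_aux (max M (3/2)) ρ ω t₀ p q (le_max_right _ _)
    (max_lt hM' (by linarith)) hρ hp hq
  · intro t ht
    refine le_trans (hrecp t ht) (max_le_max ?_ le_rfl)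
    linarith [key t]
  · intro t ht
    refine le_trans (hrecq t ht) (max_le_max ?_ le_rfl)
    linarith [key t]
end

section
/- Let ⟨R_m⟩_{m≥0} be a strictly increasing positive real sequence with R_m → ∞, satisfying R_{m+1} ≤ M(R_m − R_{m-1}) + R_m/2 + ω for all m ≥ 1, for constants M > 0 and ω ∈ ℝ. Then M ≥ 3/2 + √2. -/
/-- If a strictly increasing positive sequence R_m → ∞ satisfies
R_{m+1} ≤ M(R_m − R_{m-1}) + R_m/2 + ω for all m ≥ 1 with M > 0,
then M ≥ 3/2 + √2. -/
theorem stmt8 (R : ℕ → ℝ) (M ω : ℝ) (hM : 0 < M)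
    (hpos : ∀ m, 0 < R m) (hmono : StrictMono R)
    (htop : Filter.Tendsto R Filter.atTop Filter.atTop)
    (hrec : ∀ m : ℕ, 1 ≤ m → R (m + 1) ≤ M * (R m - R (m - 1)) + R m / 2 + ω) :
    3 / 2 + Real.sqrt 2 ≤ M := by
  by_contra hlt
  push_neg at hlt
  set x : ℕ → ℝ := fun m => R (m + 1) / R m with hxdef
  have hx1 : ∀ m, 1 < x m := fun m => (one_lt_div (hpos m)).2 (hmono (Nat.lt_succ_self m))
  have hxpos : ∀ m, 0 < x m := fun m => lt_trans one_pos (hx1 m)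
  have hxrec : ∀ m, x (m + 1) ≤ M * (1 - 1 / x m) + 1 / 2 + ω / R (m + 1) := by
    intro m
    have h := hrec (m + 1) (Nat.le_add_left 1 m)
    simp only [Nat.add_sub_cancel] at h
    have h2 : x (m + 1) ≤ (M * (R (m + 1) - R m) + R (m + 1) / 2 + ω) / R (m + 1) :=
      (div_le_div_iff_of_pos_right (hpos (m + 1))).2 h
    have heq : (M * (R (m + 1) - R m) + R (m + 1) / 2 + ω) / R (m + 1)
        = M * (1 - 1 / x m) + 1 / 2 + ω / R (m + 1) := by
      have h0 : R m ≠ 0 := (hpos m).ne'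
      have h1 : R (m + 1) ≠ 0 := (hpos (m + 1)).ne'
      rw [hxdef]
      field_simp
    linarith [h2, heq ▸ h2]
  -- quadratic lower bound
  obtain ⟨c, hc, hquad⟩ : ∃ c > 0, ∀ ξ : ℝ, 1 ≤ ξ → c ≤ ξ ^ 2 - (M + 1 / 2) * ξ + M := by
    rcases le_or_gt M (3 / 2) with h | h
    · refine ⟨1 / 2, by norm_num, fun ξ hξ => ?_⟩
      nlinarith [mul_nonneg (sub_nonneg.2 hξ) (show (0:ℝ) ≤ ξ - M + 1 / 2 by linarith)]
    · refine ⟨(2 - (M - 3 / 2) ^ 2) / 4, ?_, fun ξ hξ => ?_⟩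
      · have hs : M - 3 / 2 < Real.sqrt 2 := by linarith
        have h2 : (M - 3 / 2) ^ 2 < (Real.sqrt 2) ^ 2 := by
          have : (0:ℝ) < Real.sqrt 2 := Real.sqrt_pos.2 (by norm_num)
          nlinarith
        rw [Real.sq_sqrt (by norm_num : (2:ℝ) ≥ 0)] at h2
        linarith
      · nlinarith [sq_nonneg (ξ - (M + 1 / 2) / 2)]
  set δ : ℝ := min (c / (2 * (M + 1))) (1 / 2) with hδdef
  have hδpos : 0 < δ := lt_min (by positivity) (by norm_num)
  have hδhalf : δ ≤ 1 / 2 := min_le_right _ _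
  have hδc : 2 * δ * (M + 1) ≤ c := by
    have h1 : δ ≤ c / (2 * (M + 1)) := min_le_left _ _
    rw [le_div_iff₀ (by positivity)] at h1
    linarith
  -- eventual smallness of ω / R (m+1)
  obtain ⟨N, hN⟩ : ∃ N, ∀ m ≥ N, ω / δ ≤ R m := (htop.eventually_ge_atTop (ω / δ)).exists_forall_of_atTop
  have heps : ∀ m ≥ N, ω / R (m + 1) ≤ δ := by
    intro m hm
    rw [div_le_iff₀ (hpos (m + 1))]
    have h1 : ω / δ ≤ R (m + 1) := hN (m + 1) (le_trans hm (Nat.le_succ m))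
    have h2 : δ * (ω / δ) ≤ δ * R (m + 1) := mul_le_mul_of_nonneg_left h1 hδpos.le
    rw [mul_div_cancel₀ ω (ne_of_gt hδpos)] at h2
    linarith
  have hbound : ∀ m ≥ N, x (m + 1) ≤ M + 1 := by
    intro m hm
    have h1 := hxrec m
    have h2 := heps m hm
    have h3 : 0 < 1 / x m := one_div_pos.2 (hxpos m)
    nlinarith
  have hdec : ∀ m ≥ N, x (m + 2) ≤ x (m + 1) - δ := by
    intro m hm
    have hb : x (m + 1) ≤ M + 1 := hbound m hm
    have hr := hxrec (m + 1)
    have he := heps (m + 1) (le_trans hm (Nat.le_succ m))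
    have h1 := hx1 (m + 1)
    have hp := hxpos (m + 1)
    have hq := hquad (x (m + 1)) h1.le
    have hinv : x (m + 1) * (1 / x (m + 1)) = 1 := mul_one_div_cancel (ne_of_gt hp)
    nlinarith [mul_nonneg hδpos.le (sub_nonneg.2 hb), mul_le_mul_of_nonneg_left hr hp.le]
  have hiter : ∀ k : ℕ, x (N + 1 + k) ≤ x (N + 1) - k * δ := by
    intro k
    induction k with
    | zero => simp
    | succ k ih =>
      have h1 : N + 1 + (k + 1) = (N + k) + 2 := by omega
      have h2 : N + 1 + k = (N + k) + 1 := by omega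
      rw [h1]
      have := hdec (N + k) (Nat.le_add_right N k)
      rw [← h2] at this
      push_cast
      linarith
  obtain ⟨k, hk⟩ := exists_nat_gt ((x (N + 1) - 1) / δ)
  have hk2 : x (N + 1) - 1 < k * δ := by
    rw [div_lt_iff₀ hδpos] at hk
    linarith
  have := hiter k
  have := hx1 (N + 1 + k)
  linarith
end

section
/- Fix M = 1/‖A‖_∞ with ‖A‖_∞ > 0, and let ω > 0. Suppose nonnegative sequences ⟨p^i_t⟩, ⟨q^i_t⟩ for i = 1,…,n satisfy p^i_{t+1} ≤ (M ∑_{j∈N_i} |a_{ij}| max_{1≤s≤t}{p^j_s, q^j_s} + ω − ∑_{s=1}^t p^i_s)⁺ and the analogous inequality for q^i_{t+1}, for all t ≥ 1. If the global supremum 𝔅* = sup{p^j_s, q^j_s : s ≥ 1, j} is finite, then ∑_{t=1}^∞ p^i_t < ∞ and ∑_{t=1}^∞ q^i_t < ∞ for every i. -/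
/-- The infinity norm ‖A‖_∞ = max_i ∑_j |a_{ij}| of a weighted adjacency matrix. -/
noncomputable def infNorm (n : ℕ) (hn : 0 < n) (A : Fin n → Fin n → ℝ) : ℝ :=
  Finset.univ.sup' (Finset.univ_nonempty_iff.mpr ⟨⟨0, hn⟩⟩)
    (fun i => ∑ j, |A i j|)

/-- max_{1≤s≤t} {p^j_s, q^j_s} (for t ≥ 1, with nonnegative sequences). -/
noncomputable def histMax (p q : ℕ → ℝ) (t : ℕ) : ℝ :=
  (Finset.Icc 1 t).fold max 0 (fun s => max (p s) (q s))

/-- With M = 1/‖A‖_∞ and ω > 0, if nonnegative sequences p, q satisfy the coupled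
positive-part recursions and their global supremum is finite, then all partial
sums converge: ∑_t p^i_t < ∞ and ∑_t q^i_t < ∞ for every i. -/
theorem stmt10 (n : ℕ) (hn : 0 < n) (A : Fin n → Fin n → ℝ)
    (hA : 0 < infNorm n hn A) (ω : ℝ) (hω : 0 < ω)
    (p q : Fin n → ℕ → ℝ)
    (hp : ∀ i t, 0 ≤ p i t) (hq : ∀ i t, 0 ≤ q i t)
    (hrecp : ∀ i : Fin n, ∀ t : ℕ, 1 ≤ t →
      p i (t + 1) ≤ max ((1 / infNorm n hn A) * ∑ j, |A i j| * histMax (p j) (q j) t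
        + ω - ∑ s ∈ Finset.Icc 1 t, p i s) 0)
    (hrecq : ∀ i : Fin n, ∀ t : ℕ, 1 ≤ t →
      q i (t + 1) ≤ max ((1 / infNorm n hn A) * ∑ j, |A i j| * histMax (p j) (q j) t
        + ω - ∑ s ∈ Finset.Icc 1 t, q i s) 0)
    (hB : ∃ B : ℝ, ∀ j : Fin n, ∀ s : ℕ, 1 ≤ s → p j s ≤ B ∧ q j s ≤ B) :
    ∀ i : Fin n, Summable (fun t => p i t) ∧ Summable (fun t => q i t) := by
  obtain ⟨B, hBb⟩ := hB
  intro i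
  set N := infNorm n hn A with hNdef
  set B' := max B 0 with hB'
  have hB'0 : (0:ℝ) ≤ B' := le_max_right _ _
  have hhist : ∀ j t, histMax (p j) (q j) t ≤ B' := by
    intro j t
    rw [histMax, Finset.fold_max_le]
    refine ⟨hB'0, fun s hs => ?_⟩
    simp only [Finset.mem_Icc] at hs
    have := hBb j s hs.1
    exact max_le (this.1.trans (le_max_left _ _)) (this.2.trans (le_max_left _ _))
  obtain ⟨C, hC⟩ : ∃ C : ℝ, C = (1/N) * ∑ j, |A i j| * B' + ω := ⟨_, rfl⟩
  have hC0 : 0 ≤ C := by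
    have h1 : 0 ≤ (1/N) * ∑ j, |A i j| * B' := by
      apply mul_nonneg
      · positivity
      · exact Finset.sum_nonneg fun j _ => mul_nonneg (abs_nonneg _) hB'0
    linarith
  have key : ∀ f : ℕ → ℝ, (∀ t, 0 ≤ f t) →
      (∀ t, 1 ≤ t → f (t+1) ≤ max ((1/N) * ∑ j, |A i j| * histMax (p j) (q j) t
        + ω - ∑ s ∈ Finset.Icc 1 t, f s) 0) →
      Summable f := by
    intro f hf hrec
    have hbound : ∀ t, 1 ≤ t → ∑ s ∈ Finset.Icc 1 t, f s ≤ f 1 + C := by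
      intro t ht
      induction t with
      | zero => omega
      | succ t ih =>
        rcases Nat.lt_or_ge t 1 with h1 | ht1
        · have : t = 0 := by omega
          subst this
          simp only [Finset.Icc_self, Finset.sum_singleton]
          linarith
        · have ihh := ih ht1
          have hsum : ∑ s ∈ Finset.Icc 1 (t+1), f s
              = (∑ s ∈ Finset.Icc 1 t, f s) + f (t+1) :=
            Finset.sum_Icc_succ_top (by omega) f
          have harg : (1/N) * ∑ j, |A i j| * histMax (p j) (q j) t + ω ≤ C := by
            have hs : ∑ j, |A i j| * histMax (p j) (q j) t ≤ ∑ j, |A i j| * B' :=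
              Finset.sum_le_sum fun j _ =>
                mul_le_mul_of_nonneg_left (hhist j t) (abs_nonneg _)
            have hMpos : 0 < 1/N := by positivity
            rw [hC]
            nlinarith [hs, mul_le_mul_of_nonneg_left hs hMpos.le]
          rcases le_or_gt ((1/N) * ∑ j, |A i j| * histMax (p j) (q j) t
              + ω - ∑ s ∈ Finset.Icc 1 t, f s) 0 with h0 | h0
          · have hle : f (t+1) ≤ 0 := by
              have := hrec t ht1
              rwa [max_eq_right h0] at this
            have hf0 : f (t+1) = 0 := le_antisymm hle (hf _)
            rw [hsum, hf0]; linarith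
          · have hle : f (t+1) ≤ C - ∑ s ∈ Finset.Icc 1 t, f s := by
              have := hrec t ht1
              rw [max_eq_left h0.le] at this
              linarith
            rw [hsum]
            have := hf 1
            linarith
    have hrange : ∀ m : ℕ, ∑ s ∈ Finset.range (m+1), f s
        = f 0 + ∑ s ∈ Finset.Icc 1 m, f s := by
      intro m
      induction m with
      | zero => simp
      | succ m ih =>
        rw [Finset.sum_range_succ, ih, Finset.sum_Icc_succ_top (by omega) f]
        ring
    apply summable_of_sum_range_le hf (c := f 0 + (f 1 + C))
    intro m
    match m with
    | 0 => simpa using add_nonneg (hf 0) (add_nonneg (hf 1) hC0)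
    | 1 => simpa using add_nonneg (hf 1) hC0
    | (m+2) =>
      rw [hrange (m+1)]
      have := hbound (m+1) (by omega)
      linarith
  exact ⟨key (p i) (hp i) (hrecp i), key (q i) (hq i) (hrecq i)⟩
end

section
/- Let ⟨χ(t)⟩_{t≥1} be a nonnegative real sequence and |I₀| ≥ 0 with χ(1) > |I₀|/2, satisfying χ(t+1) ≥ 4χ(t) − |I₀|/2 − ∑_{s=1}^t χ(s) for all t ≥ 1. Then χ(t) > 0 for all t ≥ 1 and ∑_{s=1}^∞ χ(s) = ∞. -/
/-- If χ(1) > |I₀|/2 ≥ 0 and χ(t+1) ≥ 4χ(t) − |I₀|/2 − ∑_{s=1}^t χ(s), then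
χ(t) > 0 for all t ≥ 1 and the partial sums ∑_{s=1}^t χ(s) diverge to infinity. -/
theorem stmt17 (χ : ℕ → ℝ) (I₀ : ℝ) (hI : 0 ≤ I₀)
    (hχ : ∀ t : ℕ, 1 ≤ t → 0 ≤ χ t) (h1 : I₀ / 2 < χ 1)
    (hrec : ∀ t : ℕ, 1 ≤ t →
      χ (t + 1) ≥ 4 * χ t - I₀ / 2 - ∑ s ∈ Finset.Icc 1 t, χ s) :
    (∀ t : ℕ, 1 ≤ t → 0 < χ t) ∧
    Filter.Tendsto (fun t => ∑ s ∈ Finset.Icc 1 t, χ s) Filter.atTop Filter.atTop := by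
  set S : ℕ → ℝ := fun t => ∑ s ∈ Finset.Icc 1 t, χ s with hS
  set d : ℝ := χ 1 - I₀ / 2 with hd
  have hd0 : 0 < d := by simp [hd]; linarith
  clear_value S d
  have hSnonneg : ∀ n, 0 ≤ S n := by
    intro n
    rw [hS]
    exact Finset.sum_nonneg fun s hs => hχ s (Finset.mem_Icc.mp hs).1
  have key : ∀ n : ℕ, d * 2 ^ n ≤ χ (n + 1) - I₀ / 2 - S n := by
    intro n
    induction n with
    | zero => simp [hS, hd]
    | succ n ih =>
      have hrec' := hrec (n + 1) (by omega)
      have hsum : S (n + 1) = S n + χ (n + 1) := by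
        rw [hS]; exact Finset.sum_Icc_succ_top (by omega : 1 ≤ n + 1) χ
      have h2 : (2:ℝ) ^ (n + 1) = 2 * 2 ^ n := by ring
      rw [h2, hsum]
      rw [show n + 1 + 1 = (n + 1) + 1 from rfl] at hrec'
      have hrec'' : χ (n + 1 + 1) ≥ 4 * χ (n + 1) - I₀ / 2 - S (n + 1) := by rw [hS]; exact hrec'
      rw [hsum] at hrec''
      linarith [ih, hrec'']
  have hpos : ∀ t : ℕ, 1 ≤ t → 0 < χ t := by
    intro t ht
    obtain ⟨n, rfl⟩ : ∃ n, t = n + 1 := ⟨t - 1, by omega⟩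
    have := key n
    have h2 : (0:ℝ) < 2 ^ n := by positivity
    nlinarith [hSnonneg n]
  refine ⟨hpos, ?_⟩
  have hcomp : ∀ t : ℕ, 1 ≤ t → d * 2 ^ (t - 1) ≤ S t := by
    intro t ht
    obtain ⟨n, rfl⟩ : ∃ n, t = n + 1 := ⟨t - 1, by omega⟩
    have := key n
    have hsum : S (n + 1) = S n + χ (n + 1) := by
      rw [hS]; exact Finset.sum_Icc_succ_top (by omega : 1 ≤ n + 1) χ
    simp only [Nat.add_sub_cancel]
    linarith [hSnonneg n, hI, this, hsum]
  have htend : Filter.Tendsto (fun t : ℕ => d * 2 ^ (t - 1)) Filter.atTop Filter.atTop := by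
    apply Filter.Tendsto.const_mul_atTop hd0
    apply Filter.Tendsto.comp (tendsto_pow_atTop_atTop_of_one_lt (by norm_num : (1:ℝ) < 2))
    exact Filter.tendsto_atTop_atTop.mpr fun b => ⟨b + 1, fun a ha => by omega⟩
  exact Filter.tendsto_atTop_mono' _ (Filter.eventually_atTop.mpr ⟨1, hcomp⟩) htend
end
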